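/- arXiv:1701.01337 — 2 statements merged into one kernel-verified Lean document; each statement's English description precedes it below -/
import Mathlib

section
/- Let G be a graph with h(G) = bw(G) that admits at least two distinct optimum bisections, i.e., there exist bisection vectors y and y' with cw(y) = cw(y') = bw(G) and y' ∉ {y, −y}. Then the maximizing vector is unique up to constant translation: if d₁ and d₂ both satisfy g(G,d₁) = g(G,d₂) = bw(G), then d₁ − d₂ = c·𝟙 for some c ∈ ℝ (where 𝟙 is the all-ones vector). Moreover, for every optimum bisection vector y there exists a unique α^{(y)} ∈ ℝ with g(G, d^{(y)} + α^{(y)}·y) = bw(G). -/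
open Matrix BigOperators Finset

noncomputable section

/-- Adjacency matrix of a graph on `Fin n`, with real entries. -/
def adjA {n : ℕ} (G : SimpleGraph (Fin n)) [DecidableRel G.Adj] :
    Matrix (Fin n) (Fin n) ℝ :=
  Matrix.of fun i j => if G.Adj i j then (1 : ℝ) else 0

/-- A bisection vector: entries in `{+1, -1}` summing to zero. -/
def IsBisection {n : ℕ} (x : Fin n → ℝ) : Prop :=
  (∀ i, x i = 1 ∨ x i = -1) ∧ ∑ i, x i = 0

/-- Cut width of a `±1` vector: `∑_{{i,j}∈E} (1 - x_i x_j)/2`, written as a sum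
over ordered pairs (each edge counted twice, hence the `/4`). -/
def cw {n : ℕ} (G : SimpleGraph (Fin n)) [DecidableRel G.Adj] (x : Fin n → ℝ) : ℝ :=
  (∑ i, ∑ j, adjA G i j * (1 - x i * x j)) / 4

/-- Bisection width: minimum cut width over all bisection vectors. -/
def bw {n : ℕ} (G : SimpleGraph (Fin n)) [DecidableRel G.Adj] : ℝ :=
  sInf {c | ∃ x : Fin n → ℝ, IsBisection x ∧ cw G x = c}

/-- `λ_S(B)`: supremum of the Rayleigh quotient of `B` over nonzero vectors of
coordinate sum zero. -/
def lamS {n : ℕ} (B : Matrix (Fin n) (Fin n) ℝ) : ℝ :=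
  sSup {r | ∃ x : Fin n → ℝ, x ≠ 0 ∧ ∑ i, x i = 0 ∧
    r = (x ⬝ᵥ B.mulVec x) / (∑ i, (x i) ^ 2)}

/-- Sum of all entries of a matrix. -/
def msum {n : ℕ} (M : Matrix (Fin n) (Fin n) ℝ) : ℝ := ∑ i, ∑ j, M i j

/-- Boppana's function `g(G,d)`. -/
def gB {n : ℕ} (G : SimpleGraph (Fin n)) [DecidableRel G.Adj] (d : Fin n → ℝ) : ℝ :=
  (msum (adjA G + Matrix.diagonal d) - n * lamS (adjA G + Matrix.diagonal d)) / 4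

/-- Boppana's lower bound `h(G) = sup_d g(G,d)`. -/
def hB {n : ℕ} (G : SimpleGraph (Fin n)) [DecidableRel G.Adj] : ℝ :=
  sSup {r | ∃ d : Fin n → ℝ, r = gB G d}

/-- The vector `d^{(y)} = -diag(y)·A·y`, i.e. `d^{(y)}_i = -y_i ∑_j A_{ij} y_j`. -/
def dVec {n : ℕ} (G : SimpleGraph (Fin n)) [DecidableRel G.Adj]
    (y : Fin n → ℝ) : Fin n → ℝ :=
  fun i => -(y i) * ∑ j, adjA G i j * y j

/-!
If `g(G, d) = cw(z)` for a bisection `z`, then `z` maximises the Rayleigh quotient of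
`B = A + diag d` on `S`, and the first-order condition gives `B z = λ_S(B) z + c 𝟙`.
Multiplying by `z` (using `z_i² = 1`) shows `d = d^{(z)} + c z + λ_S(B) 𝟙`. Writing two optimal
vectors `d₁, d₂` in this form for both `y` and `y'` gives `d₁ - d₂ = a y + const = b y' + const`,
and `y' ≠ ±y` forces `a = 0`.

For the second part, `g` is continuous and invariant under adding constants, and for `n ≥ 3`
its superlevel sets on the hyperplane `∑ d = 0` are bounded (test `B` against `e_i - e_j`), so
the supremum `h(G) = bw(G)` is attained. Writing a maximiser in the form above produces
`α^{(z)}`, and the first part makes it unique.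
-/

lemma eq_zero_of_forall_nonneg_mul_add_mul_sq {a b : ℝ} (h : ∀ t : ℝ, 0 ≤ b * t + a * t ^ 2) :
    b = 0 := by
  by_contra hb
  have hs : 0 < |a| + 1 := by positivity
  have ht := h (-b / (|a| + 1))
  have hb2 : 0 < b ^ 2 := by positivity
  have key : b * (-b / (|a| + 1)) + a * (-b / (|a| + 1)) ^ 2
      = b ^ 2 * (a - (|a| + 1)) / (|a| + 1) ^ 2 := by
    field_simp
    ring
  rw [key] at ht
  have : b ^ 2 * (a - (|a| + 1)) < 0 := mul_neg_of_pos_of_neg hb2 (by linarith [le_abs_self a])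
  exact absurd ht (not_le.mpr (div_neg_of_neg_of_pos this (by positivity)))

namespace Matrix

variable {n : ℕ}

lemma dotProduct_mulVec_le_sum_abs_mul (B : Matrix (Fin n) (Fin n) ℝ) (x : Fin n → ℝ) :
    x ⬝ᵥ B *ᵥ x ≤ (∑ i, ∑ j, |B i j|) * ∑ i, x i ^ 2 := by
  have hterm : ∀ i j, x i * (B i j * x j) ≤ |B i j| * ∑ k, x k ^ 2 := fun i j => by
    have hi := Finset.single_le_sum (fun k _ => sq_nonneg (x k)) (Finset.mem_univ i)
    have hj := Finset.single_le_sum (fun k _ => sq_nonneg (x k)) (Finset.mem_univ j)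
    have hB := abs_nonneg (B i j)
    have hxx : x i * x j ≤ (x i ^ 2 + x j ^ 2) / 2 := by nlinarith [sq_nonneg (x i - x j)]
    have hxx' : -(x i * x j) ≤ (x i ^ 2 + x j ^ 2) / 2 := by nlinarith [sq_nonneg (x i + x j)]
    rcases abs_cases (B i j) with ⟨h, -⟩ | ⟨h, -⟩ <;> rw [h] at hB ⊢ <;> nlinarith
  calc x ⬝ᵥ B *ᵥ x = ∑ i, ∑ j, x i * (B i j * x j) := by
        simp only [dotProduct, mulVec, Finset.mul_sum]
    _ ≤ ∑ i, ∑ j, |B i j| * ∑ k, x k ^ 2 :=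
        Finset.sum_le_sum fun i _ => Finset.sum_le_sum fun j _ => hterm i j
    _ = (∑ i, ∑ j, |B i j|) * ∑ i, x i ^ 2 := by simp only [Finset.sum_mul]

lemma sum_sq_pos_of_ne_zero {x : Fin n → ℝ} (hx : x ≠ 0) : 0 < ∑ i, x i ^ 2 := by
  obtain ⟨i, hi : x i ≠ 0⟩ := Function.ne_iff.mp hx
  exact Finset.sum_pos' (fun j _ => sq_nonneg _) ⟨i, Finset.mem_univ i, by positivity⟩

lemma dotProduct_mulVec_le_lamS (B : Matrix (Fin n) (Fin n) ℝ) {x : Fin n → ℝ}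
    (hx : ∑ i, x i = 0) : x ⬝ᵥ B *ᵥ x ≤ lamS B * ∑ i, x i ^ 2 := by
  rcases eq_or_ne x 0 with rfl | hx0
  · simp
  have hbdd : BddAbove {r | ∃ x : Fin n → ℝ, x ≠ 0 ∧ ∑ i, x i = 0 ∧
      r = (x ⬝ᵥ B *ᵥ x) / ∑ i, x i ^ 2} := by
    refine ⟨∑ i, ∑ j, |B i j|, ?_⟩
    rintro _ ⟨x, hx0, -, rfl⟩
    exact (div_le_iff₀ (sum_sq_pos_of_ne_zero hx0)).mpr (dotProduct_mulVec_le_sum_abs_mul B x)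
  exact (div_le_iff₀ (sum_sq_pos_of_ne_zero hx0)).mp (le_csSup hbdd ⟨x, hx0, hx, rfl⟩)

lemma sum_single_sub_single (i j : Fin n) :
    ∑ k, (Pi.single i 1 - Pi.single j 1 : Fin n → ℝ) k = 0 := by
  simp [Finset.sum_sub_distrib]

lemma sum_sq_single_sub_single {i j : Fin n} (hij : i ≠ j) :
    ∑ k, (Pi.single i 1 - Pi.single j 1 : Fin n → ℝ) k ^ 2 = 2 := by
  have hsq : ∀ x : Fin n → ℝ, ∑ k, x k ^ 2 = x ⬝ᵥ x := fun x => by simp only [dotProduct, sq]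
  rw [hsq]
  norm_num [hij, Ne.symm hij]

-- For `n ≤ 1` the Rayleigh set is empty and `lamS B = sSup ∅ = 0`.
lemma lamS_le_of_forall (hn : 2 ≤ n) {B : Matrix (Fin n) (Fin n) ℝ} {K : ℝ}
    (h : ∀ x : Fin n → ℝ, ∑ i, x i = 0 → x ⬝ᵥ B *ᵥ x ≤ K * ∑ i, x i ^ 2) : lamS B ≤ K := by
  have : Nontrivial (Fin n) := Fin.nontrivial_iff_two_le.mpr hn
  obtain ⟨i, j, hij⟩ := exists_pair_ne (Fin n)
  have hx0 : (Pi.single i 1 - Pi.single j 1 : Fin n → ℝ) ≠ 0 := fun h0 => by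
    have h2 := sum_sq_single_sub_single hij
    rw [h0] at h2
    simp at h2
  refine csSup_le ⟨_, _, hx0, sum_single_sub_single i j, rfl⟩ ?_
  rintro _ ⟨x, hx0, hx, rfl⟩
  exact (div_le_iff₀ (sum_sq_pos_of_ne_zero hx0)).mpr (h x hx)

lemma dotProduct_diagonal_mulVec (e x : Fin n → ℝ) :
    x ⬝ᵥ diagonal e *ᵥ x = ∑ i, e i * x i ^ 2 := by
  simp only [dotProduct, mulVec_diagonal]
  exact Finset.sum_congr rfl fun i _ => by ring

lemma lamS_add_diagonal_le (hn : 2 ≤ n) (B : Matrix (Fin n) (Fin n) ℝ) (e : Fin n → ℝ) :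
    lamS (B + diagonal e) ≤ lamS B + ‖e‖ := by
  refine lamS_le_of_forall hn fun x hx => ?_
  have hdiag : ∑ i, e i * x i ^ 2 ≤ ‖e‖ * ∑ i, x i ^ 2 := by
    rw [Finset.mul_sum]
    refine Finset.sum_le_sum fun i _ => mul_le_mul_of_nonneg_right ?_ (sq_nonneg _)
    exact (le_abs_self _).trans ((Real.norm_eq_abs (e i)).symm ▸ norm_le_pi_norm e i)
  rw [add_mulVec, dotProduct_add, dotProduct_diagonal_mulVec, add_mul]
  linarith [dotProduct_mulVec_le_lamS B hx]

lemma lamS_add_diagonal_const (hn : 2 ≤ n) (B : Matrix (Fin n) (Fin n) ℝ) (c : ℝ) :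
    lamS (B + diagonal fun _ => c) = lamS B + c := by
  have hquad : ∀ x : Fin n → ℝ, x ⬝ᵥ (B + diagonal fun _ => c) *ᵥ x
      = x ⬝ᵥ B *ᵥ x + c * ∑ i, x i ^ 2 := fun x => by
    rw [add_mulVec, dotProduct_add, dotProduct_diagonal_mulVec, Finset.mul_sum]
  refine le_antisymm (lamS_le_of_forall hn fun x hx => ?_) ?_
  · rw [hquad, add_mul]
    linarith [dotProduct_mulVec_le_lamS B hx]
  · suffices lamS B ≤ lamS (B + diagonal fun _ => c) - c by linarith
    refine lamS_le_of_forall hn fun x hx => ?_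
    have := dotProduct_mulVec_le_lamS (B + diagonal fun _ => c) hx
    rw [hquad] at this
    linarith

lemma lipschitzWith_lamS_add_diagonal (hn : 2 ≤ n) (B : Matrix (Fin n) (Fin n) ℝ) :
    LipschitzWith 1 fun d : Fin n → ℝ => lamS (B + diagonal d) := by
  refine LipschitzWith.of_le_add_mul 1 fun d₁ d₂ => ?_
  have h := lamS_add_diagonal_le hn (B + diagonal d₂) (d₁ - d₂)
  rwa [add_assoc, diagonal_add, ← Pi.add_def, add_sub_cancel, ← dist_eq_norm,
    ← one_mul (dist d₁ d₂)] at h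

lemma diag_add_diag_sub_le_lamS (B : Matrix (Fin n) (Fin n) ℝ) {i j : Fin n} (hij : i ≠ j) :
    B i i + B j j - B i j - B j i ≤ 2 * lamS B := by
  have h := dotProduct_mulVec_le_lamS B (sum_single_sub_single i j)
  rw [sum_sq_single_sub_single hij] at h
  simp only [mulVec_sub, dotProduct_sub, sub_dotProduct, single_dotProduct, mulVec_single_one,
    col_apply, one_mul] at h
  linarith

lemma exists_mulVec_eq_of_dotProduct_mulVec_eq_lamS {B : Matrix (Fin n) (Fin n) ℝ} (hB : B.IsSymm)
    {x : Fin n → ℝ} (hx : ∑ i, x i = 0) (heq : x ⬝ᵥ B *ᵥ x = lamS B * ∑ i, x i ^ 2) :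
    ∃ c, ∀ i, (B *ᵥ x) i = lamS B * x i + c := by
  have hperp : ∀ w : Fin n → ℝ, ∑ i, w i = 0 → w ⬝ᵥ B *ᵥ x = lamS B * (w ⬝ᵥ x) := by
    intro w hw
    have hsq : ∀ v : Fin n → ℝ, ∑ i, v i ^ 2 = v ⬝ᵥ v := fun v => by simp only [dotProduct, sq]
    have hsymm : x ⬝ᵥ B *ᵥ w = w ⬝ᵥ B *ᵥ x := by
      rw [dotProduct_mulVec, ← mulVec_transpose, hB, dotProduct_comm]
    have hquad : ∀ t : ℝ, 0 ≤ 2 * (lamS B * (w ⬝ᵥ x) - w ⬝ᵥ B *ᵥ x) * t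
        + (lamS B * ∑ i, w i ^ 2 - w ⬝ᵥ B *ᵥ w) * t ^ 2 := fun t => by
      have h := dotProduct_mulVec_le_lamS B (x := x + t • w)
        (by simp [Finset.sum_add_distrib, hx, hw, ← Finset.mul_sum])
      rw [hsq] at h heq ⊢
      simp only [mulVec_add, mulVec_smul, dotProduct_add, add_dotProduct, dotProduct_smul,
        smul_dotProduct, smul_eq_mul, hsymm, dotProduct_comm x w] at h
      linear_combination h - heq
    linarith [eq_zero_of_forall_nonneg_mul_add_mul_sq hquad]
  have hconst : ∀ i j, (B *ᵥ x) i - lamS B * x i = (B *ᵥ x) j - lamS B * x j := fun i j => by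
    have h := hperp _ (sum_single_sub_single i j)
    simp only [sub_dotProduct, single_dotProduct, one_mul] at h
    linarith
  rcases isEmpty_or_nonempty (Fin n) with _ | ⟨⟨i₀⟩⟩
  · exact ⟨0, fun i => isEmptyElim i⟩
  · exact ⟨(B *ᵥ x) i₀ - lamS B * x i₀, fun i => by linarith [hconst i i₀]⟩

end Matrix

namespace IsBisection

variable {n : ℕ} {x y : Fin n → ℝ}

lemma mul_self_eq_one (hx : IsBisection x) (i : Fin n) : x i * x i = 1 := by
  rcases hx.1 i with h | h <;> simp [h]

lemma sum_sq (hx : IsBisection x) : ∑ i, x i ^ 2 = n := by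
  simp [sq, hx.mul_self_eq_one]

lemma dotProduct_add_diagonal_mulVec (hx : IsBisection x) (M : Matrix (Fin n) (Fin n) ℝ)
    (d : Fin n → ℝ) : x ⬝ᵥ (M + diagonal d) *ᵥ x = x ⬝ᵥ M *ᵥ x + ∑ i, d i := by
  simp [add_mulVec, dotProduct_add, dotProduct_diagonal_mulVec, sq, hx.mul_self_eq_one]

lemma eq_neg_of_ne (hx : IsBisection x) (hy : IsBisection y) {i : Fin n} (h : y i ≠ x i) :
    y i = -x i := by
  rcases hx.1 i with hxi | hxi <;> rcases hy.1 i with hyi | hyi <;> simp_all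

lemma eq_of_ne_neg (hx : IsBisection x) (hy : IsBisection y) {i : Fin n} (h : y i ≠ -x i) :
    y i = x i := by
  rcases hx.1 i with hxi | hxi <;> rcases hy.1 i with hyi | hyi <;> simp_all

lemma const_eq_zero_of_forall_mul_add_mul_eq (hx : IsBisection x) (hy : IsBisection y) (hn : 0 < n)
    {a b k : ℝ} (h : ∀ i, a * x i + b * y i = k) : k = 0 := by
  have hsum : ∑ i, (a * x i + b * y i) = n * k := by simp [h]
  rw [Finset.sum_add_distrib, ← Finset.mul_sum, ← Finset.mul_sum, hx.2, hy.2] at hsum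
  have : (n : ℝ) ≠ 0 := by positivity
  simpa [this] using hsum.symm

lemma eq_zero_of_forall_mul_eq (hx : IsBisection x) (hn : 0 < n) {a k : ℝ}
    (h : ∀ i, a * x i = k) : a = 0 := by
  have hk : k = 0 := hx.const_eq_zero_of_forall_mul_add_mul_eq hx hn (b := 0) (by simpa using h)
  have h₀ := h ⟨0, hn⟩
  rw [hk] at h₀
  linear_combination x ⟨0, hn⟩ * h₀ - a * hx.mul_self_eq_one ⟨0, hn⟩

lemma eq_zero_of_forall_mul_add_mul_eq_of_ne (hx : IsBisection x) (hy : IsBisection y)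
    (hne : y ≠ x) (hne' : y ≠ -x) {a b k : ℝ} (h : ∀ i, a * x i + b * y i = k) : a = 0 := by
  obtain ⟨i, hi⟩ := Function.ne_iff.mp hne
  obtain ⟨j, hj⟩ := Function.ne_iff.mp hne'
  have hk : k = 0 := hx.const_eq_zero_of_forall_mul_add_mul_eq hy i.pos h
  have hi' := h i
  have hj' := h j
  rw [hx.eq_neg_of_ne hy hi, hk] at hi'
  rw [hx.eq_of_ne_neg hy hj, hk] at hj'
  linear_combination (x i * hi' - (a - b) * hx.mul_self_eq_one i + x j * hj'
    - (a + b) * hx.mul_self_eq_one j) / 2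

lemma three_le (hx : IsBisection x) (hy : IsBisection y) (hne : y ≠ x) (hne' : y ≠ -x) :
    3 ≤ n := by
  by_contra hn
  obtain ⟨i, hi⟩ := Function.ne_iff.mp hne
  obtain ⟨j, hj⟩ := Function.ne_iff.mp hne'
  have hyi := hx.eq_neg_of_ne hy hi
  have hyj := hx.eq_of_ne_neg hy hj
  have hij : i ≠ j := by
    rintro rfl
    have := hx.mul_self_eq_one i
    nlinarith
  have huniv : ({i, j} : Finset (Fin n)) = Finset.univ :=
    Finset.eq_univ_of_card _ (by rw [Finset.card_pair hij, Fintype.card_fin]; omega)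
  have hsx := hx.2
  have hsy := hy.2
  rw [← huniv, Finset.sum_pair hij] at hsx hsy
  have := hx.mul_self_eq_one j
  nlinarith

end IsBisection

lemma msum_add_diagonal {n : ℕ} (M : Matrix (Fin n) (Fin n) ℝ) (e : Fin n → ℝ) :
    msum (M + diagonal e) = msum M + ∑ i, e i := by
  simp [msum, Finset.sum_add_distrib, diagonal_apply]

section Graph

variable {n : ℕ} (G : SimpleGraph (Fin n)) [DecidableRel G.Adj]

lemma adjA_isSymm : (adjA G).IsSymm := by
  ext i j
  simp [adjA, G.adj_comm]

lemma adjA_apply_self (i : Fin n) : adjA G i i = 0 := by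
  simp [adjA]

lemma adjA_le_one (i j : Fin n) : adjA G i j ≤ 1 := by
  simp only [adjA, of_apply]
  split_ifs <;> norm_num

lemma cw_eq (x : Fin n → ℝ) : cw G x = (msum (adjA G) - x ⬝ᵥ adjA G *ᵥ x) / 4 := by
  simp only [cw, msum, dotProduct, mulVec, Finset.mul_sum, ← Finset.sum_sub_distrib]
  congr 1
  exact Finset.sum_congr rfl fun i _ => Finset.sum_congr rfl fun j _ => by ring

lemma gB_eq (d : Fin n → ℝ) :
    gB G d = (msum (adjA G) + ∑ i, d i - n * lamS (adjA G + diagonal d)) / 4 := by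
  rw [gB, msum_add_diagonal]

lemma gB_le_cw (d : Fin n → ℝ) {z : Fin n → ℝ} (hz : IsBisection z) : gB G d ≤ cw G z := by
  have h := dotProduct_mulVec_le_lamS (adjA G + diagonal d) hz.2
  rw [hz.dotProduct_add_diagonal_mulVec, hz.sum_sq] at h
  rw [gB_eq, cw_eq]
  linarith

lemma gB_add_const (hn : 2 ≤ n) (d : Fin n → ℝ) (c : ℝ) :
    gB G (fun i => d i + c) = gB G d := by
  rw [gB_eq, gB_eq, ← diagonal_add, ← add_assoc, lamS_add_diagonal_const hn, Finset.sum_add_distrib]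
  simp only [Finset.sum_const, Finset.card_univ, Fintype.card_fin, nsmul_eq_mul]
  ring

lemma continuous_gB (hn : 2 ≤ n) : Continuous (gB G) := by
  have hgB : gB G = fun d => (msum (adjA G) + ∑ i, d i - n * lamS (adjA G + diagonal d)) / 4 :=
    funext (gB_eq G)
  rw [hgB]
  have := (lipschitzWith_lamS_add_diagonal hn (adjA G)).continuous
  fun_prop

lemma exists_eq_dVec_add_of_gB_eq_cw {d z : Fin n → ℝ} (hz : IsBisection z)
    (h : gB G d = cw G z) : ∃ α c : ℝ, ∀ i, d i = dVec G z i + α * z i + c := by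
  set B := adjA G + diagonal d
  have heq : z ⬝ᵥ B *ᵥ z = lamS B * ∑ i, z i ^ 2 := by
    rw [gB_eq, cw_eq] at h
    rw [hz.dotProduct_add_diagonal_mulVec, hz.sum_sq]
    linarith
  obtain ⟨c, hc⟩ := exists_mulVec_eq_of_dotProduct_mulVec_eq_lamS
    ((adjA_isSymm G).add (isSymm_diagonal d)) hz.2 heq
  refine ⟨c, lamS B, fun i => ?_⟩
  have hi := hc i
  rw [add_mulVec, Pi.add_apply, mulVec_diagonal] at hi
  change d i = -z i * (adjA G *ᵥ z) i + c * z i + lamS B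
  linear_combination z i * hi - (d i - lamS B) * hz.mul_self_eq_one i

end Graph

section Coercive

variable {n : ℕ}

lemma le_of_sum_eq_zero_of_add_le (hn : 3 ≤ n) {d : Fin n → ℝ} (hd : ∑ i, d i = 0) {M : ℝ}
    (h : ∀ i j, i ≠ j → d i + d j ≤ M) (i : Fin n) : d i ≤ (n - 1) * M / (n - 2) := by
  have hcard : ((Finset.univ.erase i).card : ℝ) = n - 1 := by
    rw [Finset.card_erase_of_mem (Finset.mem_univ i), Finset.card_univ, Fintype.card_fin,
      Nat.cast_sub (by omega), Nat.cast_one]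
  have hsum : ∑ j ∈ Finset.univ.erase i, (d i + d j) = (n - 2) * d i := by
    rw [Finset.sum_add_distrib, Finset.sum_const, nsmul_eq_mul, hcard,
      Finset.sum_erase_eq_sub (Finset.mem_univ i), hd]
    ring
  have hle : ∑ j ∈ Finset.univ.erase i, (d i + d j) ≤ (n - 1) * M := by
    rw [← hcard, ← nsmul_eq_mul, ← Finset.sum_const]
    exact Finset.sum_le_sum fun j hj => h i j (Finset.ne_of_mem_erase hj).symm
  have hn' : (3 : ℝ) ≤ n := by exact_mod_cast hn
  rw [le_div_iff₀ (by linarith), mul_comm]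
  linarith

lemma neg_le_of_sum_eq_zero_of_le {d : Fin n → ℝ} (hd : ∑ i, d i = 0) {U : ℝ}
    (h : ∀ i, d i ≤ U) (i : Fin n) : -((n - 1) * U) ≤ d i := by
  have hcard : ((Finset.univ.erase i).card : ℝ) = n - 1 := by
    rw [Finset.card_erase_of_mem (Finset.mem_univ i), Finset.card_univ, Fintype.card_fin,
      Nat.cast_sub i.pos, Nat.cast_one]
  have hle : ∑ j ∈ Finset.univ.erase i, d j ≤ (n - 1) * U := by
    rw [← hcard, ← nsmul_eq_mul, ← Finset.sum_const]
    exact Finset.sum_le_sum fun j _ => h j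
  rw [Finset.sum_erase_eq_sub (Finset.mem_univ i), hd] at hle
  linarith

variable (G : SimpleGraph (Fin n)) [DecidableRel G.Adj]

lemma add_le_two_mul_lamS_add_two (d : Fin n → ℝ) {i j : Fin n} (hij : i ≠ j) :
    d i + d j ≤ 2 * lamS (adjA G + diagonal d) + 2 := by
  have h := diag_add_diag_sub_le_lamS (adjA G + diagonal d) hij
  simp only [Matrix.add_apply, diagonal_apply_eq, diagonal_apply_ne _ hij,
    diagonal_apply_ne _ (Ne.symm hij), adjA_apply_self, zero_add, add_zero] at h
  linarith [adjA_le_one G i j, adjA_le_one G j i]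

lemma exists_isCompact_superset_superlevel_gB (hn : 3 ≤ n) (m : ℝ) :
    ∃ K : Set (Fin n → ℝ), IsCompact K ∧ ∀ d, ∑ i, d i = 0 → m ≤ gB G d → d ∈ K := by
  set Λ := (msum (adjA G) - 4 * m) / n
  set U := (n - 1) * (2 * Λ + 2) / (n - 2)
  refine ⟨Set.Icc (fun _ => -((n - 1) * U)) (fun _ => U), isCompact_Icc, fun d hd hm => ?_⟩
  have hlam : lamS (adjA G + diagonal d) ≤ Λ := by
    have hn' : (0 : ℝ) < n := by positivity
    rw [gB_eq, hd] at hm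
    rw [le_div_iff₀ hn']
    linarith
  have hup : ∀ i, d i ≤ U := le_of_sum_eq_zero_of_add_le hn hd fun i j hij =>
    (add_le_two_mul_lamS_add_two G d hij).trans (by linarith)
  exact ⟨fun i => neg_le_of_sum_eq_zero_of_le hd hup i, hup⟩

end Coercive

section Attain

variable {n : ℕ} (G : SimpleGraph (Fin n)) [DecidableRel G.Adj]

lemma exists_sum_eq_zero_gB_eq (hn : 2 ≤ n) (d : Fin n → ℝ) :
    ∃ d' : Fin n → ℝ, ∑ i, d' i = 0 ∧ gB G d' = gB G d := by
  set μ := (∑ j, d j) / n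
  refine ⟨fun i => d i - μ, ?_, ?_⟩
  · simp only [Finset.sum_sub_distrib, Finset.sum_const, Finset.card_univ, Fintype.card_fin,
      nsmul_eq_mul, μ]
    field_simp
    ring
  · simpa using (gB_add_const G hn (fun i => d i - μ) μ).symm

lemma exists_gB_eq_hB (hn : 3 ≤ n) (hbdd : BddAbove (Set.range (gB G))) :
    ∃ d, gB G d = hB G := by
  have hn₂ : 2 ≤ n := by omega
  have hhB : hB G = sSup (Set.range (gB G)) := by
    rw [hB]
    congr 1
    ext
    simp [eq_comm]
  obtain ⟨K, hK, hmemK⟩ := exists_isCompact_superset_superlevel_gB G hn (hB G - 1)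
  obtain ⟨_, ⟨d₀, rfl⟩, hd₀⟩ :=
    exists_lt_of_lt_csSup (Set.range_nonempty (gB G)) (sub_one_lt (sSup (Set.range (gB G))))
  rw [← hhB] at hd₀
  obtain ⟨d₀', hsum₀, hg₀⟩ := exists_sum_eq_zero_gB_eq G hn₂ d₀
  have hd₀K : d₀' ∈ K := hmemK d₀' hsum₀ (hg₀ ▸ hd₀.le)
  obtain ⟨dmax, -, hmax⟩ := hK.exists_isMaxOn ⟨d₀', hd₀K⟩ (continuous_gB G hn₂).continuousOn
  have hub : ∀ d, gB G d ≤ gB G dmax := by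
    intro d
    obtain ⟨d', hsum, hg⟩ := exists_sum_eq_zero_gB_eq G hn₂ d
    rw [← hg]
    by_cases h : hB G - 1 ≤ gB G d'
    · exact isMaxOn_iff.mp hmax d' (hmemK d' hsum h)
    · linarith [isMaxOn_iff.mp hmax d₀' hd₀K]
  refine ⟨dmax, le_antisymm ?_ ?_⟩
  · exact hhB ▸ le_csSup hbdd ⟨dmax, rfl⟩
  · exact hhB ▸ csSup_le (Set.range_nonempty _) (by rintro _ ⟨d, rfl⟩; exact hub d)

end Attain

section Main

variable {n : ℕ} (G : SimpleGraph (Fin n)) [DecidableRel G.Adj]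

lemma exists_sub_eq_const_of_gB_eq_cw {y y' d₁ d₂ : Fin n → ℝ} (hy : IsBisection y)
    (hy' : IsBisection y') (hne : y' ≠ y) (hne' : y' ≠ -y)
    (h₁ : gB G d₁ = cw G y) (h₁' : gB G d₁ = cw G y')
    (h₂ : gB G d₂ = cw G y) (h₂' : gB G d₂ = cw G y') :
    ∃ c : ℝ, d₁ - d₂ = fun _ => c := by
  obtain ⟨α₁, c₁, e₁⟩ := exists_eq_dVec_add_of_gB_eq_cw G hy h₁
  obtain ⟨α₂, c₂, e₂⟩ := exists_eq_dVec_add_of_gB_eq_cw G hy h₂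
  obtain ⟨β₁, c₁', e₁'⟩ := exists_eq_dVec_add_of_gB_eq_cw G hy' h₁'
  obtain ⟨β₂, c₂', e₂'⟩ := exists_eq_dVec_add_of_gB_eq_cw G hy' h₂'
  have hα : α₁ - α₂ = 0 := hy.eq_zero_of_forall_mul_add_mul_eq_of_ne hy' hne hne'
    (b := β₂ - β₁) (k := c₁' - c₂' - c₁ + c₂) fun i => by
      linear_combination e₁' i - e₂' i - e₁ i + e₂ i
  exact ⟨c₁ - c₂, funext fun i => by
    simp only [Pi.sub_apply]
    linear_combination e₁ i - e₂ i + y i * hα⟩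

end Main

theorem dopt_unique_of_two_bisections_general {n : ℕ}
    (G : SimpleGraph (Fin n)) [DecidableRel G.Adj]
    (hh : hB G = bw G)
    (y y' : Fin n → ℝ) (hy : IsBisection y) (hy' : IsBisection y')
    (hopt : cw G y = bw G) (hopt' : cw G y' = bw G)
    (hne1 : y' ≠ y) (hne2 : y' ≠ -y) :
    (∀ d₁ d₂ : Fin n → ℝ, gB G d₁ = bw G → gB G d₂ = bw G →
        ∃ c : ℝ, d₁ - d₂ = fun _ => c) ∧
    (∀ z : Fin n → ℝ, IsBisection z → cw G z = bw G →
        ∃! α : ℝ, gB G (fun i => dVec G z i + α * z i) = bw G) := by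
  have hn : 3 ≤ n := hy.three_le hy' hne1 hne2
  have hunique : ∀ d₁ d₂ : Fin n → ℝ, gB G d₁ = bw G → gB G d₂ = bw G →
      ∃ c : ℝ, d₁ - d₂ = fun _ => c := fun d₁ d₂ h₁ h₂ =>
    exists_sub_eq_const_of_gB_eq_cw G hy hy' hne1 hne2 (h₁.trans hopt.symm)
      (h₁.trans hopt'.symm) (h₂.trans hopt.symm) (h₂.trans hopt'.symm)
  refine ⟨hunique, fun z hz hoptz => ?_⟩
  obtain ⟨dopt, hdopt⟩ := exists_gB_eq_hB G hn ⟨cw G y, by rintro _ ⟨d, rfl⟩; exact gB_le_cw G d hy⟩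
  rw [hh] at hdopt
  obtain ⟨α, c, hα⟩ := exists_eq_dVec_add_of_gB_eq_cw G hz (hdopt.trans hoptz.symm)
  have hαopt : gB G (fun i => dVec G z i + α * z i) = bw G := by
    rw [← hdopt, ← gB_add_const G (by omega) _ c]
    exact congrArg (gB G) (funext fun i => (hα i).symm)
  refine ⟨α, hαopt, fun β hβ => ?_⟩
  obtain ⟨k, hk⟩ := hunique _ _ hβ hαopt
  have := hz.eq_zero_of_forall_mul_eq (by omega) (a := β - α) (k := k) fun i => by
    have hki := congrFun hk i
    simp only [Pi.sub_apply] at hki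
    linear_combination hki
  linarith

/-- if `h(G) = bw(G)` and there are at least two distinct optimum
bisections, then the maximizing vector `d^opt` is unique up to constant
translation, and for every optimum bisection vector `y` there is a unique
`α^{(y)}` with `g(G, d^{(y)} + α^{(y)}·y) = bw(G)`. -/
theorem dopt_unique_of_two_bisections {n : ℕ} (hn2 : 2 ≤ n) (hne : Even n)
    (G : SimpleGraph (Fin n)) [DecidableRel G.Adj]
    (hh : hB G = bw G)
    (y y' : Fin n → ℝ) (hy : IsBisection y) (hy' : IsBisection y')
    (hopt : cw G y = bw G) (hopt' : cw G y' = bw G)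
    (hne1 : y' ≠ y) (hne2 : y' ≠ -y) :
    (∀ d₁ d₂ : Fin n → ℝ, gB G d₁ = bw G → gB G d₂ = bw G →
        ∃ c : ℝ, d₁ - d₂ = fun _ => c) ∧
    (∀ z : Fin n → ℝ, IsBisection z → cw G z = bw G →
        ∃! α : ℝ, gB G (fun i => dVec G z i + α * z i) = bw G) :=
  dopt_unique_of_two_bisections_general G hh y y' hy hy' hopt hopt' hne1 hne2
end
end

section
/- Let G be a graph on n vertices with h(G) = bw(G), and let G' be the graph on n + 2 vertices obtained from G by adding two isolated vertices. Then h(G') ≤ h(G) − 4·bw(G)/n². -/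
open Matrix BigOperators Finset

noncomputable section

lemma quad_eq {m : ℕ} (B : Matrix (Fin m) (Fin m) ℝ) (v : Fin m → ℝ) :
    v ⬝ᵥ B.mulVec v = ∑ i, ∑ j, B i j * v i * v j := by
  simp only [dotProduct, Matrix.mulVec, Finset.mul_sum]
  exact Finset.sum_congr rfl fun i _ => Finset.sum_congr rfl fun j _ => by ring

lemma le_lamS {m : ℕ} (B : Matrix (Fin m) (Fin m) ℝ) (v : Fin m → ℝ)
    (hv : v ≠ 0) (hs : ∑ i, v i = 0) :
    (v ⬝ᵥ B.mulVec v) / (∑ i, (v i)^2) ≤ lamS B := by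
  refine le_csSup ?_ ⟨v, hv, hs, rfl⟩
  refine ⟨∑ i, ∑ j, |B i j|, ?_⟩
  rintro r ⟨w, hw, -, rfl⟩
  set C := ∑ i, ∑ j, |B i j| with hC
  have hS : 0 < ∑ i, (w i)^2 := by
    obtain ⟨i, hi⟩ := Function.ne_iff.mp hw
    exact Finset.sum_pos' (fun j _ => sq_nonneg _) ⟨i, Finset.mem_univ i, pow_two_pos_of_ne_zero hi⟩
  rw [div_le_iff₀ hS, quad_eq]
  have step1 : ∑ i, ∑ j, B i j * w i * w j
      ≤ ∑ i, ∑ j, |B i j| * ((w i)^2 + (w j)^2) / 2 := by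
    refine Finset.sum_le_sum fun i _ => Finset.sum_le_sum fun j _ => ?_
    have h1 : B i j * w i * w j ≤ |B i j| * (|w i| * |w j|) := by
      calc B i j * w i * w j ≤ |B i j * w i * w j| := le_abs_self _
        _ = |B i j| * (|w i| * |w j|) := by rw [abs_mul, abs_mul, mul_assoc]
    have h2 : |w i| * |w j| ≤ ((w i)^2 + (w j)^2)/2 := by
      nlinarith [sq_nonneg (|w i| - |w j|), sq_abs (w i), sq_abs (w j)]
    nlinarith [abs_nonneg (B i j)]
  have hrow : ∀ i : Fin m, ∑ j, |B i j| ≤ C := fun i =>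
    Finset.single_le_sum (f := fun k => ∑ j, |B k j|)
      (fun k _ => Finset.sum_nonneg fun j _ => abs_nonneg _) (Finset.mem_univ i)
  have hcol : ∀ j : Fin m, ∑ i, |B i j| ≤ C := by
    intro j
    have h4 : ∑ i, ∑ j', |B i j'| = ∑ j', ∑ i, |B i j'| := Finset.sum_comm
    rw [hC, h4]
    exact Finset.single_le_sum (f := fun k => ∑ i, |B i k|)
      (fun k _ => Finset.sum_nonneg fun i _ => abs_nonneg _) (Finset.mem_univ j)
  have step2 : ∑ i, ∑ j, |B i j| * ((w i)^2 + (w j)^2) / 2 ≤ C * ∑ i, (w i)^2 := by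
    have e1 : ∑ i, ∑ j, |B i j| * ((w i)^2 + (w j)^2) / 2
        = (∑ i, ∑ j, |B i j| * (w i)^2) / 2 + (∑ i, ∑ j, |B i j| * (w j)^2) / 2 := by
      rw [Finset.sum_div, Finset.sum_div, ← Finset.sum_add_distrib]
      refine Finset.sum_congr rfl fun i _ => ?_
      rw [Finset.sum_div, Finset.sum_div, ← Finset.sum_add_distrib]
      exact Finset.sum_congr rfl fun j _ => by ring
    have e2 : ∑ i, ∑ j, |B i j| * (w i)^2 = ∑ i, (∑ j, |B i j|) * (w i)^2 :=
      Finset.sum_congr rfl fun i _ => by rw [Finset.sum_mul]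
    have e3 : ∑ i, ∑ j, |B i j| * (w j)^2 = ∑ j, (∑ i, |B i j|) * (w j)^2 := by
      rw [Finset.sum_comm]
      exact Finset.sum_congr rfl fun j _ => by rw [Finset.sum_mul]
    have b1 : ∑ i, (∑ j, |B i j|) * (w i)^2 ≤ C * ∑ i, (w i)^2 := by
      rw [Finset.mul_sum]
      exact Finset.sum_le_sum fun i _ => mul_le_mul_of_nonneg_right (hrow i) (sq_nonneg _)
    have b2 : ∑ j, (∑ i, |B i j|) * (w j)^2 ≤ C * ∑ j, (w j)^2 := by
      rw [Finset.mul_sum]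
      exact Finset.sum_le_sum fun j _ => mul_le_mul_of_nonneg_right (hcol j) (sq_nonneg _)
    rw [e1, e2, e3]; linarith
  linarith

lemma cw_nonneg {m : ℕ} (G : SimpleGraph (Fin m)) [DecidableRel G.Adj] {x : Fin m → ℝ}
    (hx : ∀ i, x i = 1 ∨ x i = -1) : 0 ≤ cw G x := by
  unfold cw
  apply div_nonneg _ (by norm_num)
  refine Finset.sum_nonneg fun i _ => Finset.sum_nonneg fun j _ => ?_
  have h1 : (0:ℝ) ≤ adjA G i j := by
    unfold adjA; dsimp; split <;> norm_num
  have h2 : x i * x j ≤ 1 := by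
    rcases hx i with h|h <;> rcases hx j with h'|h' <;> rw [h, h'] <;> norm_num
  nlinarith

lemma bw_attained {m : ℕ} (hm : Even m) (G : SimpleGraph (Fin m)) [DecidableRel G.Adj] :
    ∃ x : Fin m → ℝ, IsBisection x ∧ cw G x = bw G := by
  classical
  obtain ⟨k, hk⟩ := hm
  have hbis : IsBisection (fun i : Fin m => if (i : ℕ) < k then (1:ℝ) else -1) := by
    constructor
    · intro i; by_cases h : (i:ℕ) < k <;> simp [h]
    · have e0 : ∑ i : Fin m, (if (i:ℕ) < k then (1:ℝ) else -1)
          = ∑ i ∈ Finset.range m, (if i < k then (1:ℝ) else -1) :=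
        Fin.sum_univ_eq_sum_range (fun i => if i < k then (1:ℝ) else -1) m
      rw [e0, hk, Finset.range_eq_Ico,
        ← Finset.sum_Ico_consecutive _ (Nat.zero_le k) (Nat.le_add_right k k)]
      have e1 : ∑ i ∈ Finset.Ico 0 k, (if i < k then (1:ℝ) else -1) = k := by
        rw [Finset.sum_congr rfl (fun i hi => if_pos (Finset.mem_Ico.mp hi).2)]
        simp
      have e2 : ∑ i ∈ Finset.Ico k (k+k), (if i < k then (1:ℝ) else -1) = -(k:ℝ) := by
        rw [Finset.sum_congr rfl (fun i hi => if_neg (by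
          have := (Finset.mem_Ico.mp hi).1; omega))]
        simp
      rw [e1, e2]; ring
  have hne : Set.Nonempty {c | ∃ x : Fin m → ℝ, IsBisection x ∧ cw G x = c} := ⟨_, _, hbis, rfl⟩
  have hfin : Set.Finite {c | ∃ x : Fin m → ℝ, IsBisection x ∧ cw G x = c} := by
    have h1 : ({x : Fin m → ℝ | ∀ i, x i ∈ ({1, -1} : Set ℝ)}).Finite := by
      have h2 := Set.Finite.pi (fun _ : Fin m => (Set.toFinite ({1,-1} : Set ℝ)))
      refine h2.subset ?_
      intro x hx i _
      exact hx i
    refine (h1.image (cw G)).subset ?_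
    rintro c ⟨x, hx, rfl⟩
    exact ⟨x, fun i => by rcases hx.1 i with h|h <;> rw [h] <;> simp, rfl⟩
  exact hne.csInf_mem hfin

set_option maxHeartbeats 2000000 in
/-- adding two isolated vertices to a graph with `h(G) = bw(G)`
decreases `h` by at least `4·bw(G)/n²`. -/
theorem two_isolated_vertices_decrease_h {n : ℕ} (hn2 : 2 ≤ n) (hne : Even n)
    (G : SimpleGraph (Fin n)) [DecidableRel G.Adj]
    (G' : SimpleGraph (Fin (n + 2))) [DecidableRel G'.Adj]
    (hh : hB G = bw G)
    (hG' : ∀ a b : Fin (n + 2), G'.Adj a b ↔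
      ∃ (ha : (a : ℕ) < n) (hb : (b : ℕ) < n), G.Adj ⟨(a : ℕ), ha⟩ ⟨(b : ℕ), hb⟩) :
    hB G' ≤ hB G - 4 * bw G / (n : ℝ) ^ 2 := by
  classical
  rw [hh]
  obtain ⟨x, ⟨hx1, hx0⟩, hcw⟩ := bw_attained hne G
  have hxsq : ∀ i, x i * x i = 1 := fun i => by rcases hx1 i with h|h <;> rw [h] <;> norm_num
  have hbw0 : 0 ≤ bw G := hcw ▸ cw_nonneg G hx1
  have hn : (2:ℝ) ≤ (n:ℝ) := by exact_mod_cast hn2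
  have hnpos : (0:ℝ) < (n:ℝ) := by linarith
  have hRHS : 0 ≤ bw G - 4 * bw G / (n:ℝ)^2 := by
    rw [sub_nonneg, div_le_iff₀ (by positivity)]
    nlinarith [mul_le_mul_of_nonneg_left (by nlinarith : (4:ℝ) ≤ (n:ℝ)^2) hbw0]
  apply Real.sSup_le _ hRHS
  rintro r ⟨d', rfl⟩
  set nn : ℝ := (n : ℝ) with hnn
  set e : Fin n → Fin (n+2) := fun i => i.castSucc.castSucc with he
  set p : Fin (n+2) := (Fin.last n).castSucc with hp
  set q : Fin (n+2) := Fin.last (n+1) with hq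
  have hep : ∀ i : Fin n, ((e i : Fin (n+2)) : ℕ) = (i : ℕ) := fun i => rfl
  have hpv : ((p : Fin (n+2)) : ℕ) = n := rfl
  have hqv : ((q : Fin (n+2)) : ℕ) = n + 1 := rfl
  have split_sum : ∀ f : Fin (n+2) → ℝ, ∑ i, f i = (∑ i : Fin n, f (e i)) + f p + f q := by
    intro f
    rw [Fin.sum_univ_castSucc, Fin.sum_univ_castSucc]
  have hpn : ¬ ((p : ℕ) < n) := by rw [hpv]; omega
  have hqn : ¬ ((q : ℕ) < n) := by rw [hqv]; omega
  have hepne : ∀ i : Fin n, e i ≠ p := by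
    intro i h
    have hv := congrArg Fin.val h
    rw [hep i, hpv] at hv
    have := i.isLt; omega
  have heqne : ∀ i : Fin n, e i ≠ q := by
    intro i h
    have hv := congrArg Fin.val h
    rw [hep i, hqv] at hv
    have := i.isLt; omega
  have hpq : p ≠ q := by
    intro h
    have hv := congrArg Fin.val h
    rw [hpv, hqv] at hv; omega
  have heinj : ∀ i j : Fin n, e i = e j ↔ i = j := by
    intro i j
    constructor
    · intro h; exact Fin.ext (by rw [← hep i, ← hep j, h])
    · intro h; rw [h]
  -- adjacency facts
  have hAe : ∀ i j : Fin n, adjA G' (e i) (e j) = adjA G i j := by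
    intro i j
    have hiff : G'.Adj (e i) (e j) ↔ G.Adj i j := by
      rw [hG']
      constructor
      · rintro ⟨ha, hb, h⟩
        have h1 : (⟨((e i : Fin (n+2)) : ℕ), ha⟩ : Fin n) = i := Fin.ext (hep i)
        have h2 : (⟨((e j : Fin (n+2)) : ℕ), hb⟩ : Fin n) = j := Fin.ext (hep j)
        rwa [h1, h2] at h
      · intro h
        refine ⟨by rw [hep i]; exact i.isLt, by rw [hep j]; exact j.isLt, ?_⟩
        have h1 : (⟨((e i : Fin (n+2)) : ℕ), by rw [hep i]; exact i.isLt⟩ : Fin n) = i :=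
          Fin.ext (hep i)
        have h2 : (⟨((e j : Fin (n+2)) : ℕ), by rw [hep j]; exact j.isLt⟩ : Fin n) = j :=
          Fin.ext (hep j)
        rw [h1, h2]; exact h
    unfold adjA
    simp only [Matrix.of_apply]
    by_cases h : G.Adj i j
    · rw [if_pos (hiff.mpr h), if_pos h]
    · rw [if_neg (fun hc => h (hiff.mp hc)), if_neg h]
  have hA0 : ∀ i j : Fin (n+2), ¬((i:ℕ) < n ∧ (j:ℕ) < n) → adjA G' i j = 0 := by
    intro i j hij
    unfold adjA
    simp only [Matrix.of_apply]
    rw [if_neg]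
    rw [hG']
    rintro ⟨ha, hb, -⟩
    exact hij ⟨ha, hb⟩
  set B' := adjA G' + Matrix.diagonal d' with hB'
  set dtop : Fin n → ℝ := fun i => d' (e i) with hdtop
  set Btop := adjA G + Matrix.diagonal dtop with hBtop
  have hBe : ∀ i j : Fin n, B' (e i) (e j) = Btop i j := by
    intro i j
    simp only [hB', hBtop, Matrix.add_apply, Matrix.diagonal_apply, hAe]
    congr 1
    by_cases h : i = j
    · rw [if_pos ((heinj i j).mpr h), if_pos h]
    · rw [if_neg (fun hc => h ((heinj i j).mp hc)), if_neg h]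
  have hB'od : ∀ i j : Fin (n+2), ¬((i:ℕ) < n ∧ (j:ℕ) < n) → i ≠ j → B' i j = 0 := by
    intro i j h1 h2
    simp only [hB', Matrix.add_apply, Matrix.diagonal_apply, if_neg h2, hA0 i j h1, add_zero]
  have hB'pp : B' p p = d' p := by
    simp only [hB', Matrix.add_apply, Matrix.diagonal_apply, if_pos rfl,
      hA0 p p (fun h => hpn h.1), zero_add, if_true]
  have hB'qq : B' q q = d' q := by
    simp only [hB', Matrix.add_apply, Matrix.diagonal_apply, if_pos rfl,
      hA0 q q (fun h => hqn h.1), zero_add, if_true]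
  have hB'ep : ∀ i : Fin n, B' (e i) p = 0 := fun i => hB'od _ _ (fun h => hpn h.2) (hepne i)
  have hB'eq : ∀ i : Fin n, B' (e i) q = 0 := fun i => hB'od _ _ (fun h => hqn h.2) (heqne i)
  have hB'pe : ∀ i : Fin n, B' p (e i) = 0 := fun i => hB'od _ _ (fun h => hpn h.1) (Ne.symm (hepne i))
  have hB'qe : ∀ i : Fin n, B' q (e i) = 0 := fun i => hB'od _ _ (fun h => hqn h.1) (Ne.symm (heqne i))
  have hB'pq : B' p q = 0 := hB'od _ _ (fun h => hpn h.1) hpq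
  have hB'qp : B' q p = 0 := hB'od _ _ (fun h => hqn h.1) (Ne.symm hpq)
  -- sums
  have hmsum_adj : msum (adjA G') = msum (adjA G) := by
    unfold msum
    rw [split_sum (fun i => ∑ j, adjA G' i j)]
    have hrp : ∑ j, adjA G' p j = 0 :=
      Finset.sum_eq_zero fun j _ => hA0 p j (fun h => hpn h.1)
    have hrq : ∑ j, adjA G' q j = 0 :=
      Finset.sum_eq_zero fun j _ => hA0 q j (fun h => hqn h.1)
    rw [hrp, hrq, add_zero, add_zero]
    refine Finset.sum_congr rfl fun i _ => ?_
    rw [split_sum (fun j => adjA G' (e i) j)]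
    rw [hA0 (e i) p (fun h => hpn h.2), hA0 (e i) q (fun h => hqn h.2), add_zero, add_zero]
    exact Finset.sum_congr rfl fun j _ => hAe i j
  have hmsum_diag : ∀ {m : ℕ} (d : Fin m → ℝ), msum (Matrix.diagonal d) = ∑ i, d i := by
    intro m d
    unfold msum
    refine Finset.sum_congr rfl fun i _ => ?_
    simp [Matrix.diagonal_apply, Finset.sum_ite_eq]
  have hmsum_add : ∀ {m : ℕ} (X Y : Matrix (Fin m) (Fin m) ℝ),
      msum (X + Y) = msum X + msum Y := by
    intro m X Y
    unfold msum
    simp [Matrix.add_apply, Finset.sum_add_distrib]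
  set s0 : ℝ := msum (adjA G) + ∑ i : Fin n, dtop i with hs0
  set sb : ℝ := d' p + d' q with hsb
  have hsum_d' : ∑ i, d' i = (∑ i : Fin n, dtop i) + d' p + d' q := split_sum d'
  have hmsum_B' : msum B' = s0 + sb := by
    rw [hB', hmsum_add, hmsum_adj, hmsum_diag, hsum_d', hs0, hsb]; ring
  have hmsum_Btop : msum Btop = s0 := by
    rw [hBtop, hmsum_add, hmsum_diag, hs0]
  -- quadratic form of x on Btop
  have hnne : nn ≠ 0 := ne_of_gt hnpos
  have hQA : ∑ i, ∑ j, adjA G i j * (x i * x j) = msum (adjA G) - 4 * bw G := by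
    have h1 : (∑ i, ∑ j, adjA G i j * (1 - x i * x j)) = 4 * bw G := by
      rw [← hcw]; unfold cw; ring
    have h2 : ∑ i, ∑ j, adjA G i j * (1 - x i * x j)
        = msum (adjA G) - ∑ i, ∑ j, adjA G i j * (x i * x j) := by
      unfold msum
      rw [← Finset.sum_sub_distrib]
      refine Finset.sum_congr rfl fun i _ => ?_
      rw [← Finset.sum_sub_distrib]
      exact Finset.sum_congr rfl fun j _ => by ring
    linarith
  have hQdiag : ∑ i, ∑ j, Matrix.diagonal dtop i j * (x i * x j) = ∑ i, dtop i := by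
    refine Finset.sum_congr rfl fun i _ => ?_
    have h3 : ∀ j, Matrix.diagonal dtop i j * (x i * x j)
        = if i = j then dtop i * (x i * x j) else 0 := by
      intro j; rw [Matrix.diagonal_apply]; split <;> simp
    rw [Finset.sum_congr rfl fun j _ => h3 j, Finset.sum_ite_eq]
    simp [hxsq i]
  have hQB : ∑ i, ∑ j, Btop i j * (x i * x j) = s0 - 4 * bw G := by
    have h4 : ∀ i j, Btop i j * (x i * x j)
        = adjA G i j * (x i * x j) + Matrix.diagonal dtop i j * (x i * x j) := fun i j => by
      rw [hBtop, Matrix.add_apply]; ring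
    rw [Finset.sum_congr rfl fun i _ => Finset.sum_congr rfl fun j _ => h4 i j]
    rw [Finset.sum_congr rfl fun i _ => Finset.sum_add_distrib, Finset.sum_add_distrib,
      hQA, hQdiag, hs0]
    ring
  -- the test vector
  set RB : ℝ := ∑ i, ∑ j, Btop i j * (x i + x j) with hRB
  set eps : ℝ := if RB ≤ 0 then 1 else -1 with heps
  have heps2 : eps^2 = 1 := by rw [heps]; split <;> norm_num
  set u : ℝ := Real.sqrt (nn^2 - 4) with hu
  have hu0 : 0 ≤ u := Real.sqrt_nonneg _
  have hu2 : u^2 = nn^2 - 4 := Real.sq_sqrt (by nlinarith)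
  have hepsRB : eps * RB ≤ 0 := by
    rw [heps]
    split_ifs with h
    · simpa using h
    · nlinarith [lt_of_not_ge h]
  have hcross : 0 ≤ -((2*eps*u) * RB) := by
    nlinarith [mul_nonneg hu0 (neg_nonneg.mpr hepsRB)]
  set v : Fin (n+2) → ℝ := fun i => if h : (i:ℕ) < n then eps * u * x ⟨(i:ℕ), h⟩ - 2 else nn
    with hv
  have hveq : ∀ i : Fin n, v (e i) = eps * u * x i - 2 := by
    intro i
    have hlt : ((e i : Fin (n+2)) : ℕ) < n := by rw [hep i]; exact i.isLt
    rw [hv]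
    dsimp only
    rw [dif_pos hlt]
    have h5 : (⟨((e i : Fin (n+2)) : ℕ), hlt⟩ : Fin n) = i := Fin.ext (hep i)
    rw [h5]
  have hvp : v p = nn := by rw [hv]; dsimp only; rw [dif_neg hpn]
  have hvq : v q = nn := by rw [hv]; dsimp only; rw [dif_neg hqn]
  have hysum : ∑ i : Fin n, (eps * u * x i - 2) = -(2*nn) := by
    rw [Finset.sum_sub_distrib, ← Finset.mul_sum, hx0, Finset.sum_const, Finset.card_univ,
      Fintype.card_fin, mul_zero, nsmul_eq_mul, hnn]
    ring
  have hvsum : ∑ i, v i = 0 := by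
    rw [split_sum v, hvp, hvq, Finset.sum_congr rfl fun i _ => hveq i, hysum]; ring
  have hpt : ∀ i : Fin n, (eps*u*x i - 2)^2 = (u^2 + 4) - (4*eps*u) * x i := by
    intro i
    linear_combination (u^2 * (x i * x i)) * heps2 + u^2 * (hxsq i)
  have hysq : ∑ i : Fin n, (eps*u*x i - 2)^2 = nn^3 := by
    rw [Finset.sum_congr rfl fun i _ => hpt i, Finset.sum_sub_distrib, ← Finset.mul_sum, hx0,
      Finset.sum_const, Finset.card_univ, Fintype.card_fin, mul_zero, sub_zero, nsmul_eq_mul,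
      hu2, hnn]
    ring
  have hv2 : ∑ i, (v i)^2 = nn^3 + 2*nn^2 := by
    rw [split_sum (fun i => (v i)^2)]
    rw [hvp, hvq, Finset.sum_congr rfl fun i _ => congrArg (· ^ 2) (hveq i), hysq]
    ring
  have hv2pos : 0 < ∑ i, (v i)^2 := by rw [hv2]; nlinarith
  have hvne : v ≠ 0 := by
    intro h
    rw [h] at hv2
    simp at hv2
    nlinarith
  -- quadratic form of v
  have hrowe : ∀ i : Fin n, ∑ j, B' (e i) j * v (e i) * v j
      = ∑ j : Fin n, Btop i j * (eps*u*x i - 2) * (eps*u*x j - 2) := by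
    intro i
    rw [split_sum (fun j => B' (e i) j * v (e i) * v j)]
    rw [hB'ep i, hB'eq i]
    simp only [zero_mul, add_zero]
    refine Finset.sum_congr rfl fun j _ => ?_
    rw [hBe i j, hveq i, hveq j]
  have hQF : ∑ i, ∑ j, B' i j * v i * v j
      = (∑ i, ∑ j, Btop i j * (eps*u*x i - 2) * (eps*u*x j - 2)) + nn^2 * sb := by
    rw [split_sum (fun i => ∑ j, B' i j * v i * v j)]
    have hrp : ∑ j, B' p j * v p * v j = d' p * nn^2 := by
      rw [split_sum (fun j => B' p j * v p * v j)]
      rw [Finset.sum_eq_zero (fun j _ => by rw [hB'pe j]; ring), hB'pq, hB'pp, hvp]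
      simp only [zero_mul, add_zero, zero_add]
      ring
    have hrq : ∑ j, B' q j * v q * v j = d' q * nn^2 := by
      rw [split_sum (fun j => B' q j * v q * v j)]
      rw [Finset.sum_eq_zero (fun j _ => by rw [hB'qe j]; ring), hB'qp, hB'qq, hvq]
      simp only [zero_mul, add_zero, zero_add]
      ring
    rw [Finset.sum_congr rfl fun i _ => hrowe i, hrp, hrq, hsb]
    ring
  have hpt2 : ∀ i j : Fin n, Btop i j * (eps*u*x i - 2) * (eps*u*x j - 2)
      = u^2 * (Btop i j * (x i * x j)) - (2*eps*u) * (Btop i j * (x i + x j)) + 4 * Btop i j := by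
    intro i j
    linear_combination (Btop i j * u^2 * (x i * x j)) * heps2
  have hQtop : ∑ i, ∑ j, Btop i j * (eps*u*x i - 2) * (eps*u*x j - 2)
      = u^2 * (s0 - 4 * bw G) - (2*eps*u) * RB + 4 * s0 := by
    rw [Finset.sum_congr rfl fun i _ => Finset.sum_congr rfl fun j _ => hpt2 i j]
    have inner : ∀ i : Fin n, ∑ j, (u^2 * (Btop i j * (x i * x j))
          - (2*eps*u) * (Btop i j * (x i + x j)) + 4 * Btop i j)
        = u^2 * (∑ j, Btop i j * (x i * x j)) - (2*eps*u) * (∑ j, Btop i j * (x i + x j))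
          + 4 * (∑ j, Btop i j) := by
      intro i
      rw [Finset.sum_add_distrib, Finset.sum_sub_distrib, ← Finset.mul_sum, ← Finset.mul_sum,
        ← Finset.mul_sum]
    rw [Finset.sum_congr rfl fun i _ => inner i, Finset.sum_add_distrib, Finset.sum_sub_distrib,
      ← Finset.mul_sum, ← Finset.mul_sum, ← Finset.mul_sum, hQB, ← hRB,
      show (∑ i, ∑ j, Btop i j) = msum Btop from rfl, hmsum_Btop]
  -- Rayleigh bound
  have hray := le_lamS B' v hvne hvsum
  rw [quad_eq, hQF, hQtop, hv2] at hray
  set N0 : ℝ := (nn^2 - 4) * (s0 - 4 * bw G) + 4 * s0 + nn^2 * sb with hN0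
  have hD : (0:ℝ) < nn^3 + 2*nn^2 := by nlinarith
  have hlow : N0 / (nn^3 + 2*nn^2) ≤ lamS B' := by
    refine le_trans ?_ hray
    have h6 : N0 ≤ u^2 * (s0 - 4*bw G) - (2*eps*u) * RB + 4*s0 + nn^2*sb := by
      rw [hN0, hu2]; linarith
    gcongr
  -- final assembly
  show gB G' d' ≤ bw G - 4 * bw G / nn^2
  unfold gB
  rw [← hB', hmsum_B']
  have hcast : ((n + 2 : ℕ) : ℝ) = nn + 2 := by rw [hnn]; push_cast; ring
  rw [hcast]
  have key : N0 / nn^2 ≤ (nn+2) * lamS B' := by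
    have h1 : N0/nn^2 = (nn+2) * (N0/(nn^3+2*nn^2)) := by
      field_simp
    rw [h1]
    exact mul_le_mul_of_nonneg_left hlow (by linarith)
  have hfin : bw G - 4*bw G/nn^2 = ((s0 + sb) - N0/nn^2)/4 := by
    rw [hN0]; field_simp; ring
  rw [hfin]
  linarith
end
end
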